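/- arXiv:1911.12426 — 6 statements merged into one kernel-verified Lean document; each statement's English description precedes it below -/
import Mathlib

section
/- For all positive real numbers γ_p ≠ γ_q, there exist natural numbers m_p and m_q such that ∫₀¹ ∫₀¹ θ_p^(m_p + γ_p − 1) · θ_q^(m_q + γ_q − 1) dθ_p dθ_q ≠ ∫₀¹ ∫₀¹ θ_p^(m_q + γ_p − 1) · θ_q^(m_p + γ_q − 1) dθ_p dθ_q. -/
lemma double_int (a b : ℝ) (ha : -1 < a) (hb : -1 < b) :
    (∫ θq in (0:ℝ)..1, ∫ θp in (0:ℝ)..1, θp ^ a * θq ^ b)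
      = (1 / (a + 1)) * (1 / (b + 1)) := by
  have h1 : ∀ r : ℝ, -1 < r → (∫ x in (0:ℝ)..1, x ^ r) = 1 / (r + 1) := by
    intro r hr
    rw [integral_rpow (Or.inl hr)]
    rw [Real.one_rpow, Real.zero_rpow (by linarith)]
    ring
  have : (∫ θq in (0:ℝ)..1, ∫ θp in (0:ℝ)..1, θp ^ a * θq ^ b)
      = ∫ θq in (0:ℝ)..1, (1 / (a + 1)) * θq ^ b := by
    apply intervalIntegral.integral_congr
    intro θq _
    simp only
    rw [intervalIntegral.integral_mul_const, h1 a ha]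
  rw [this, intervalIntegral.integral_const_mul, h1 b hb]

theorem stmt_4 (γp γq : ℝ) (hp : 0 < γp) (hq : 0 < γq) (hne : γp ≠ γq) :
    ∃ mp mq : ℕ,
      (∫ θq in (0:ℝ)..1, ∫ θp in (0:ℝ)..1,
          θp ^ ((mp : ℝ) + γp - 1) * θq ^ ((mq : ℝ) + γq - 1))
        ≠ ∫ θq in (0:ℝ)..1, ∫ θp in (0:ℝ)..1,
            θp ^ ((mq : ℝ) + γp - 1) * θq ^ ((mp : ℝ) + γq - 1) := by
  refine ⟨1, 0, ?_⟩
  push_cast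
  rw [double_int _ _ (by linarith) (by linarith),
      double_int _ _ (by linarith) (by linarith)]
  have h1 : (1:ℝ) + γp - 1 + 1 = γp + 1 := by ring
  have h2 : (0:ℝ) + γq - 1 + 1 = γq := by ring
  have h3 : (0:ℝ) + γp - 1 + 1 = γp := by ring
  have h4 : (1:ℝ) + γq - 1 + 1 = γq + 1 := by ring
  rw [h1, h2, h3, h4]
  rw [div_mul_div_comm, div_mul_div_comm, one_mul]
  intro h
  apply hne
  have h' : (γp + 1) * γq = γp * (γq + 1) := by
    have hne1 : (γp + 1) * γq ≠ 0 := by positivity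
    have hne2 : γp * (γq + 1) ≠ 0 := by positivity
    field_simp at h
    linarith
  nlinarith
end

section
/- Let γ₀ > 0 be a real number and let f : ℕ → ℝ be positive on all naturals ≥ 1. Suppose that for every natural number x ≥ 2, (∏_{k=1}^{x−1} f(k)/(γ₀ + f(k))) · γ₀/(γ₀ + f(x)) = (∏_{k=1}^{x−2} f(k)/(γ₀ + f(k))) · (γ₀/(γ₀ + f(x−1))) · (f(x−1)/(γ₀ + f(x−1) + f(1))). Then f(x) = x · f(1) for every natural number x ≥ 1. -/
/-!
Both sides of the hypothesis at `x` share the positive factor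
`(∏ k ≤ x - 2, f k / (γ₀ + f k)) · γ₀ f (x - 1) / (γ₀ + f (x - 1))`; cancelling it leaves
`γ₀ + f x = γ₀ + f (x - 1) + f 1`. So `f` grows by `f 1` at each step and is linear by induction.
-/

lemma eq_add_of_div_mul_div_eq {γ a b c : ℝ} (hγ : γ ≠ 0) (ha : a ≠ 0) (hγa : γ + a ≠ 0)
    (h : a / (γ + a) * (γ / (γ + b)) = γ / (γ + a) * (a / (γ + a + c))) :
    b = a + c := by
  have hk : a * γ / (γ + a) ≠ 0 := div_ne_zero (mul_ne_zero ha hγ) hγa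
  have hinv : (γ + b)⁻¹ = (γ + a + c)⁻¹ := by
    refine mul_left_cancel₀ hk ?_
    calc a * γ / (γ + a) * (γ + b)⁻¹ = a / (γ + a) * (γ / (γ + b)) := by ring
      _ = γ / (γ + a) * (a / (γ + a + c)) := h
      _ = a * γ / (γ + a) * (γ + a + c)⁻¹ := by ring
  linarith [inv_injective hinv]

lemma apply_succ_eq_mul_apply_one {R : Type*} [Semiring R] {f : ℕ → R}
    (h : ∀ n, f (n + 2) = f (n + 1) + f 1) (n : ℕ) : f (n + 1) = (n + 1 : R) * f 1 := by
  induction n with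
  | zero => simp
  | succ n ih => rw [h, ih, Nat.cast_succ, add_one_mul (_ + 1 : R)]

theorem stmt_7 (γ₀ : ℝ) (hγ : 0 < γ₀) (f : ℕ → ℝ) (hf : ∀ k : ℕ, 1 ≤ k → 0 < f k)
    (h : ∀ x : ℕ, 2 ≤ x →
      (∏ k ∈ Finset.Icc 1 (x - 1), f k / (γ₀ + f k)) * (γ₀ / (γ₀ + f x))
        = (∏ k ∈ Finset.Icc 1 (x - 2), f k / (γ₀ + f k)) * (γ₀ / (γ₀ + f (x - 1)))
            * (f (x - 1) / (γ₀ + f (x - 1) + f 1))) :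
    ∀ x : ℕ, 1 ≤ x → f x = (x : ℝ) * f 1 := by
  have hrec (n : ℕ) : f (n + 2) = f (n + 1) + f 1 := by
    have hprefix : 0 < ∏ k ∈ Finset.Icc 1 n, f k / (γ₀ + f k) :=
      Finset.prod_pos fun k hk ↦
        have hfk := hf k (Finset.mem_Icc.mp hk).1
        div_pos hfk (by linarith)
    have hfn := hf (n + 1) (by omega)
    have hn := h (n + 2) (by omega)
    rw [Nat.add_sub_cancel, show n + 2 - 1 = n + 1 from rfl,
      Finset.prod_Icc_succ_top (by omega), mul_assoc, mul_assoc] at hn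
    exact eq_add_of_div_mul_div_eq hγ.ne' hfn.ne' (by positivity)
      (mul_left_cancel₀ hprefix.ne' hn)
  intro x hx
  obtain ⟨n, rfl⟩ := Nat.exists_eq_add_of_le' hx
  exact_mod_cast apply_succ_eq_mul_apply_one hrec n
end

section
/- Let a and b be real numbers with a < 1 and b < 1. Then Γ(m − a) · Γ(n − b) = Γ(m − b) · Γ(n − a) holds for all natural numbers m, n ≥ 1 if and only if a = b, where Γ denotes the real Gamma function. -/
theorem stmt_9 (a b : ℝ) (ha : a < 1) (hb : b < 1) :
    (∀ m n : ℕ, 1 ≤ m → 1 ≤ n →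
        Real.Gamma ((m : ℝ) - a) * Real.Gamma ((n : ℝ) - b)
          = Real.Gamma ((m : ℝ) - b) * Real.Gamma ((n : ℝ) - a))
      ↔ a = b := by
  constructor
  · intro h
    have h12 := h 1 2 le_rfl one_le_two
    have ha0 : (0:ℝ) < 1 - a := by linarith
    have hb0 : (0:ℝ) < 1 - b := by linarith
    have hga : 0 < Real.Gamma (1 - a) := Real.Gamma_pos_of_pos ha0
    have hgb : 0 < Real.Gamma (1 - b) := Real.Gamma_pos_of_pos hb0
    have e2a : Real.Gamma ((2:ℕ) - a) = (1 - a) * Real.Gamma (1 - a) := by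
      have := Real.Gamma_add_one (ne_of_gt ha0)
      push_cast
      rw [show (2:ℝ) - a = (1 - a) + 1 by ring, this]
    have e2b : Real.Gamma ((2:ℕ) - b) = (1 - b) * Real.Gamma (1 - b) := by
      have := Real.Gamma_add_one (ne_of_gt hb0)
      push_cast
      rw [show (2:ℝ) - b = (1 - b) + 1 by ring, this]
    rw [e2a, e2b] at h12
    simp only [Nat.cast_one] at h12
    have : (1 - b) * (Real.Gamma (1 - a) * Real.Gamma (1 - b))
        = (1 - a) * (Real.Gamma (1 - a) * Real.Gamma (1 - b)) := by ring_nf; ring_nf at h12; linarith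
    have hne : Real.Gamma (1 - a) * Real.Gamma (1 - b) ≠ 0 := by positivity
    have := mul_right_cancel₀ hne this
    linarith
  · rintro rfl
    intro m n _ _
    ring
end

section
/- For every natural number n, every real number γ > 0, and every function c : Fin n → ℕ, the Chinese Restaurant Process probability satisfies the closed form P_γ(c) = γ^T · (∏_{t ∈ image of c} (n_t − 1)!) / (∏_{i=0}^{n−1} (γ + i)), where T is the cardinality of the image of c and n_t = |{i : c(i) = t}| is the size of the fiber of c over t. -/
/-!
Every factor of `crpProb γ c` has denominator `γ + i`, independent of `c`. Grouping the numerators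
by table, the customers at a table of size `m` see `0, 1, …, m - 1` earlier customers there, so the
table contributes `γ · 1 · 2 ⋯ (m - 1) = γ · (m - 1)!`.
-/

/-- The number of earlier customers seated at the same table as customer `i`. -/
def crpEarlier {n : ℕ} (c : Fin n → ℕ) (i : Fin n) : ℕ :=
  (Finset.univ.filter (fun j : Fin n => j < i ∧ c j = c i)).card

/-- The weight of customer `i` in the Chinese Restaurant Process with parameter `γ`:
`k/(γ + i)` if `k > 0` earlier customers sit at `i`'s table, and `γ/(γ + i)` otherwise. -/
noncomputable def crpWeight (γ : ℝ) {n : ℕ} (c : Fin n → ℕ) (i : Fin n) : ℝ :=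
  if 0 < crpEarlier c i then (crpEarlier c i : ℝ) / (γ + (i : ℕ))
  else γ / (γ + (i : ℕ))

/-- The Chinese Restaurant Process probability of a seating assignment `c`. -/
noncomputable def crpProb (γ : ℝ) {n : ℕ} (c : Fin n → ℕ) : ℝ :=
  ∏ i : Fin n, crpWeight γ c i

open Finset Nat

theorem Finset.prod_card_filter_lt {α M : Type*} [LinearOrder α] [CommMonoid M]
    (s : Finset α) (g : ℕ → M) :
    ∏ i ∈ s, g #{j ∈ s | j < i} = ∏ k ∈ range #s, g k := by
  induction s using Finset.induction_on_max with
  | empty => simp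
  | insert a s ha ih =>
    have ha' : a ∉ s := fun h => lt_irrefl a (ha a h)
    have h_top : {j ∈ insert a s | j < a} = s := by
      ext j
      simp only [mem_filter, mem_insert]
      exact ⟨fun ⟨h, hj⟩ => h.resolve_left hj.ne, fun h => ⟨Or.inr h, ha j h⟩⟩
    have h_rest : ∀ i ∈ s, {j ∈ insert a s | j < i} = {j ∈ s | j < i} := fun i hi => by
      rw [filter_insert, if_neg (not_lt.2 (ha i hi).le)]
    rw [prod_insert ha', card_insert_of_notMem ha', prod_range_succ, h_top,
      prod_congr rfl fun i hi => congrArg g (congrArg card (h_rest i hi)), ih, mul_comm]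

noncomputable def crpNumerator (γ : ℝ) (k : ℕ) : ℝ :=
  if 0 < k then k else γ

theorem crpWeight_eq (γ : ℝ) {n : ℕ} (c : Fin n → ℕ) (i : Fin n) :
    crpWeight γ c i = crpNumerator γ (crpEarlier c i) / (γ + (i : ℕ)) := by
  unfold crpWeight crpNumerator
  split_ifs <;> rfl

theorem prod_range_crpNumerator (γ : ℝ) (m : ℕ) :
    ∏ k ∈ range (m + 1), crpNumerator γ k = γ * m ! := by
  simp [prod_range_succ', crpNumerator, ← prod_range_add_one_eq_factorial, mul_comm]

theorem crpEarlier_eq_card_fiber_lt {n : ℕ} (c : Fin n → ℕ) (i : Fin n) :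
    crpEarlier c i = #{j ∈ {j | c j = c i} | j < i} := by
  unfold crpEarlier
  congr 1
  ext j
  simp [and_comm]

theorem prod_fiber_crpNumerator (γ : ℝ) {n : ℕ} (c : Fin n → ℕ) {t : ℕ} (ht : t ∈ image c univ) :
    ∏ i ∈ {i | c i = t}, crpNumerator γ (crpEarlier c i) = γ * (#{i | c i = t} - 1)! := by
  obtain ⟨i₀, -, rfl⟩ := mem_image.1 ht
  have h_pos : 0 < #{i | c i = c i₀} := card_pos.2 ⟨i₀, by simp⟩
  rw [prod_congr rfl fun i hi => by rw [crpEarlier_eq_card_fiber_lt, (mem_filter.1 hi).2],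
    prod_card_filter_lt, ← Nat.sub_add_cancel h_pos, prod_range_crpNumerator, Nat.add_sub_cancel]

theorem stmt_11_general (n : ℕ) (γ : ℝ) (c : Fin n → ℕ) :
    crpProb γ c
      = γ ^ (Finset.image c Finset.univ).card
          * (∏ t ∈ Finset.image c Finset.univ,
              ((Nat.factorial ((Finset.univ.filter (fun i : Fin n => c i = t)).card - 1) : ℝ)))
          / ∏ i ∈ Finset.range n, (γ + (i : ℝ)) := by
  have h_num : ∏ i, crpNumerator γ (crpEarlier c i)
      = ∏ t ∈ image c univ, γ * (#{i | c i = t} - 1)! := by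
    rw [← prod_fiberwise_of_maps_to fun i _ => mem_image_of_mem c (mem_univ i)]
    exact prod_congr rfl fun t ht => prod_fiber_crpNumerator γ c ht
  rw [crpProb, prod_congr rfl fun i _ => crpWeight_eq γ c i, prod_div_distrib, h_num,
    prod_mul_distrib, prod_const, Fin.prod_univ_eq_prod_range (fun i => γ + (i : ℝ))]

theorem stmt_11 (n : ℕ) (γ : ℝ) (hγ : 0 < γ) (c : Fin n → ℕ) :
    crpProb γ c
      = γ ^ (Finset.image c Finset.univ).card
          * (∏ t ∈ Finset.image c Finset.univ,
              ((Nat.factorial ((Finset.univ.filter (fun i : Fin n => c i = t)).card - 1) : ℝ)))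
          / ∏ i ∈ Finset.range n, (γ + (i : ℝ)) :=
  stmt_11_general n γ c
end

section
/- For every natural number n, every real number γ > 0, every function c : Fin n → ℕ, and every permutation σ of Fin n, the Chinese Restaurant Process probability satisfies P_γ(c ∘ σ) = P_γ(c); that is, the probability of a seating assignment does not depend on the order of the customers. -/
lemma crp_lemA {n : ℕ} (S : Finset (Fin n)) (g : ℕ → ℝ) :
    ∏ i ∈ S, g ((S.filter (fun j => j < i)).card) = ∏ r ∈ Finset.range S.card, g r := by
  set f : Fin n → ℕ := fun i => (S.filter (fun j => j < i)).card with hf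
  have hmono : ∀ i ∈ S, ∀ i' ∈ S, i < i' → f i < f i' := by
    intro i hi i' hi' hlt
    apply Finset.card_lt_card
    constructor
    · intro j hj
      simp only [Finset.mem_filter] at hj ⊢
      exact ⟨hj.1, hj.2.trans hlt⟩
    · intro hsub
      have : i ∈ S.filter (fun j => j < i) := hsub (by simp [hi, hlt])
      simp at this
  have hinj : Set.InjOn f S := by
    intro a ha b hb hab
    rcases lt_trichotomy a b with h | h | h
    · exact absurd hab (ne_of_lt (hmono a ha b hb h))
    · exact h
    · exact absurd hab.symm (ne_of_lt (hmono b hb a ha h))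
  have himg : S.image f = Finset.range S.card := by
    apply Finset.eq_of_subset_of_card_le
    · intro r hr
      simp only [Finset.mem_image] at hr
      obtain ⟨i, hi, rfl⟩ := hr
      simp only [Finset.mem_range]
      apply Finset.card_lt_card
      constructor
      · exact Finset.filter_subset _ _
      · intro hsub
        have := hsub hi
        simp at this
    · rw [Finset.card_range, Finset.card_image_of_injOn hinj]
  rw [← himg, Finset.prod_image (fun a ha b hb => hinj ha hb)]

lemma crp_numEq {n : ℕ} (γ : ℝ) (c : Fin n → ℕ) :
    ∏ i : Fin n, (if 0 < crpEarlier c i then (crpEarlier c i : ℝ) else γ)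
      = ∏ t ∈ Finset.univ.image c,
          ∏ r ∈ Finset.range ((Finset.univ.filter (fun j => c j = t)).card),
            (if 0 < r then (r : ℝ) else γ) := by
  rw [← Finset.prod_fiberwise_of_maps_to
      (fun x _ => Finset.mem_image_of_mem c (Finset.mem_univ x))
      (fun i => if 0 < crpEarlier c i then (crpEarlier c i : ℝ) else γ)]
  apply Finset.prod_congr rfl
  intro t _
  have key : ∀ i ∈ Finset.univ.filter (fun j => c j = t),
      crpEarlier c i = ((Finset.univ.filter (fun j => c j = t)).filter (fun j => j < i)).card := by
    intro i hi
    simp only [Finset.mem_filter] at hi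
    unfold crpEarlier
    congr 1
    ext j
    simp [hi.2, and_comm]
  rw [Finset.prod_congr rfl (fun i hi => by rw [key i hi])]
  exact crp_lemA _ (fun k => if 0 < k then (k : ℝ) else γ)

theorem stmt_12 (n : ℕ) (γ : ℝ) (hγ : 0 < γ) (c : Fin n → ℕ) (σ : Equiv.Perm (Fin n)) :
    crpProb γ (c ∘ σ) = crpProb γ c := by
  have hw : ∀ (d : Fin n → ℕ) (i : Fin n), crpWeight γ d i
      = (if 0 < crpEarlier d i then (crpEarlier d i : ℝ) else γ) / (γ + (i : ℕ)) := by
    intro d i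
    unfold crpWeight
    split_ifs <;> rfl
  have himg : Finset.univ.image (c ∘ σ) = Finset.univ.image c := by
    ext t
    simp only [Finset.mem_image, Finset.mem_univ, true_and, Function.comp]
    constructor
    · rintro ⟨j, rfl⟩; exact ⟨σ j, rfl⟩
    · rintro ⟨j, rfl⟩; exact ⟨σ.symm j, by simp⟩
  have hcard : ∀ t, (Finset.univ.filter (fun j => (c ∘ σ) j = t)).card
      = (Finset.univ.filter (fun j => c j = t)).card := by
    intro t
    apply Finset.card_bij (fun j _ => σ j)
    · intro a ha
      simp only [Finset.mem_filter, Function.comp] at ha ⊢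
      exact ⟨Finset.mem_univ _, ha.2⟩
    · intro a _ b _ h
      exact σ.injective h
    · intro b hb
      refine ⟨σ.symm b, ?_, by simp⟩
      simp only [Finset.mem_filter, Function.comp] at hb ⊢
      simp [hb.2]
  unfold crpProb
  simp_rw [hw]
  rw [Finset.prod_div_distrib, Finset.prod_div_distrib]
  congr 1
  rw [crp_numEq γ (c ∘ σ), crp_numEq γ c, himg]
  exact Finset.prod_congr rfl (fun t _ => by rw [hcard t])
end

section
/- For every natural number n, every real number γ > 0, every function c : Fin n → ℕ, and every injective function φ : ℕ → ℕ, the Chinese Restaurant Process probability satisfies P_γ(φ ∘ c) = P_γ(c); that is, the probability of a seating assignment does not depend on the labels of the tables. -/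
theorem stmt_13 (n : ℕ) (γ : ℝ) (hγ : 0 < γ) (c : Fin n → ℕ) (φ : ℕ → ℕ)
    (hφ : Function.Injective φ) :
    crpProb γ (φ ∘ c) = crpProb γ c := by
  have hE : ∀ i, crpEarlier (φ ∘ c) i = crpEarlier c i := by
    intro i
    unfold crpEarlier
    congr 1
    ext j
    simp [Function.comp, hφ.eq_iff]
  unfold crpProb
  exact Finset.prod_congr rfl fun i _ => by unfold crpWeight; rw [hE]
end
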